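/- Let m ∈ ℝ and h ≥ 0. Then the function d ↦ ( ∫_{−d}^{d} Φ(m x + h) dμ₁(x) ) / μ₁([−d, d]) is nonincreasing on (0, ∞); that is, for 0 < d₁ ≤ d₂, the μ₁-average of x ↦ Φ(mx + h) over [−d₁, d₁] is at least its μ₁-average over [−d₂, d₂]. -/

import Mathlib

open Real MeasureTheory Set
open scoped NNReal ENNReal

/-- The standard Gaussian measure on `ℝ`, with density `(2π)^{-1/2} exp(−x²/2)`
with respect to Lebesgue measure. -/
noncomputable def stdGaussian1 : Measure ℝ :=
  volume.withDensity fun x =>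
    ENNReal.ofReal ((Real.sqrt (2 * Real.pi))⁻¹ * Real.exp (-x ^ 2 / 2))

/-- The standard normal cumulative distribution function
`Φ(x) = (2π)^{-1/2} ∫_{−∞}^x exp(−t²/2) dt`. -/
noncomputable def stdNormalCDF (x : ℝ) : ℝ :=
  (Real.sqrt (2 * Real.pi))⁻¹ * ∫ t in Set.Iic x, Real.exp (-t ^ 2 / 2)

lemma gk_integrable : Integrable (fun t : ℝ => Real.exp (-t ^ 2 / 2)) := by
  have := integrable_exp_neg_mul_sq (b := (1/2 : ℝ)) (by norm_num)
  convert this using 2 with t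
  ring_nf

lemma cdf_sub {x y : ℝ} :
    stdNormalCDF y - stdNormalCDF x
      = (Real.sqrt (2 * Real.pi))⁻¹ * ∫ t in x..y, Real.exp (-t ^ 2 / 2) := by
  rw [stdNormalCDF, stdNormalCDF, ← mul_sub,
    intervalIntegral.integral_Iic_sub_Iic gk_integrable.integrableOn gk_integrable.integrableOn]

lemma key {h : ℝ} (hh : 0 ≤ h) {a b : ℝ} (ha : 0 ≤ a) (hab : a ≤ b) :
    stdNormalCDF (b + h) + stdNormalCDF (h - b)
      ≤ stdNormalCDF (a + h) + stdNormalCDF (h - a) := by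
  have h1 : stdNormalCDF (b + h) - stdNormalCDF (a + h)
      = (Real.sqrt (2 * Real.pi))⁻¹ * ∫ t in (a+h)..(b+h), Real.exp (-t ^ 2 / 2) := cdf_sub
  have h2 : stdNormalCDF (h - a) - stdNormalCDF (h - b)
      = (Real.sqrt (2 * Real.pi))⁻¹ * ∫ t in (a+h)..(b+h), Real.exp (-(2*h-t) ^ 2 / 2) := by
    rw [cdf_sub, intervalIntegral.integral_comp_sub_left (fun t => Real.exp (-t ^ 2 / 2)) (2*h)]
    congr 2 <;> ring
  have hint : (∫ t in (a+h)..(b+h), Real.exp (-t ^ 2 / 2))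
      ≤ ∫ t in (a+h)..(b+h), Real.exp (-(2*h-t) ^ 2 / 2) := by
    apply intervalIntegral.integral_mono_on (by linarith)
    · exact (Continuous.intervalIntegrable (by continuity) _ _)
    · exact (Continuous.intervalIntegrable (by continuity) _ _)
    · intro t ht
      rcases ht with ⟨ht1, _⟩
      apply Real.exp_le_exp.2
      have : h ≤ t := by linarith
      nlinarith
  have hc : (0:ℝ) ≤ (Real.sqrt (2 * Real.pi))⁻¹ := by positivity
  nlinarith [mul_le_mul_of_nonneg_left hint hc]

lemma cdf_cont : Continuous stdNormalCDF := by
  have : ∀ y, stdNormalCDF y = stdNormalCDF 0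
      + (Real.sqrt (2 * Real.pi))⁻¹ * ∫ t in (0:ℝ)..y, Real.exp (-t ^ 2 / 2) := by
    intro y
    have := cdf_sub (x := (0:ℝ)) (y := y)
    linarith
  rw [funext this]
  apply continuous_const.add
  apply continuous_const.mul
  exact intervalIntegral.continuous_primitive
    (fun a b => (Continuous.intervalIntegrable (by continuity) _ _)) 0

/-- The symmetrization `x ↦ Φ(mx+h) + Φ(−mx+h)`. -/
noncomputable def Gaux (m h : ℝ) : ℝ → ℝ :=
  fun x => stdNormalCDF (m * x + h) + stdNormalCDF (m * -x + h)

lemma Gaux_even (m h x : ℝ) : Gaux m h (-x) = Gaux m h x := by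
  unfold Gaux; rw [neg_neg]; ring

lemma Gaux_cont (m h : ℝ) : Continuous (Gaux m h) := by
  unfold Gaux
  exact (cdf_cont.comp (by fun_prop)).add (cdf_cont.comp (by fun_prop))

lemma Gaux_mono {m h : ℝ} (hh : 0 ≤ h) {x y : ℝ} (hx : 0 ≤ x) (hxy : x ≤ y) :
    Gaux m h y ≤ Gaux m h x := by
  unfold Gaux
  rcases le_total 0 m with hm | hm
  · have hk := key hh (a := m * x) (b := m * y) (mul_nonneg hm hx)
      (mul_le_mul_of_nonneg_left hxy hm)
    have e1 : h - m * y = m * -y + h := by ring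
    have e2 : h - m * x = m * -x + h := by ring
    rw [e1, e2] at hk
    exact hk
  · have hk := key hh (a := -m * x) (b := -m * y) (mul_nonneg (by linarith) hx)
      (mul_le_mul_of_nonneg_left hxy (by linarith))
    have e1 : -m * y + h = m * -y + h := by ring
    have e2 : h - -m * y = m * y + h := by ring
    have e3 : -m * x + h = m * -x + h := by ring
    have e4 : h - -m * x = m * x + h := by ring
    rw [e1, e2, e3, e4] at hk
    linarith

lemma avg_core {ρ G : ℝ → ℝ} (hρc : Continuous ρ) (hρ : ∀ x, 0 < ρ x)
    (hGc : Continuous G)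
    {d₁ d₂ : ℝ} (hd₁ : 0 < d₁) (hd : d₁ ≤ d₂)
    (hG1 : ∀ x ∈ Icc (-d₁) d₁, G d₁ ≤ G x)
    (hG2 : ∀ x ∈ Icc d₁ d₂, G x ≤ G d₁)
    (hG3 : ∀ x ∈ Icc (-d₂) (-d₁), G x ≤ G d₁) :
    (∫ x in (-d₂)..d₂, ρ x * G x) / (∫ x in (-d₂)..d₂, ρ x)
      ≤ (∫ x in (-d₁)..d₁, ρ x * G x) / (∫ x in (-d₁)..d₁, ρ x) := by
  have hii : ∀ (f : ℝ → ℝ), Continuous f → ∀ a b : ℝ, IntervalIntegrable f volume a b :=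
    fun f hf a b => hf.intervalIntegrable a b
  have hρG : Continuous fun x => ρ x * G x := hρc.mul hGc
  have hM₁ : 0 < ∫ x in (-d₁)..d₁, ρ x :=
    intervalIntegral.integral_pos (by linarith) hρc.continuousOn
      (fun x _ => (hρ x).le) ⟨0, ⟨by linarith, by linarith⟩, hρ 0⟩
  have hM₂ : 0 < ∫ x in (-d₂)..d₂, ρ x :=
    intervalIntegral.integral_pos (by linarith) hρc.continuousOn
      (fun x _ => (hρ x).le) ⟨0, ⟨by linarith, by linarith⟩, hρ 0⟩
  rw [div_le_div_iff₀ hM₂ hM₁]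
  have split : ∀ (f : ℝ → ℝ), Continuous f →
      (∫ x in (-d₂)..d₂, f x)
        = (∫ x in (-d₂)..(-d₁), f x) + (∫ x in (-d₁)..d₁, f x) + ∫ x in d₁..d₂, f x := by
    intro f hf
    rw [intervalIntegral.integral_add_adjacent_intervals (hii f hf _ _) (hii f hf _ _),
      intervalIntegral.integral_add_adjacent_intervals (hii f hf _ _) (hii f hf _ _)]
  rw [split _ hρG, split _ hρc]
  set g := G d₁ with hg
  have hLm : (0:ℝ) ≤ ∫ x in (-d₂)..(-d₁), ρ x :=
    intervalIntegral.integral_nonneg (by linarith) (fun x _ => (hρ x).le)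
  have hRm : (0:ℝ) ≤ ∫ x in d₁..d₂, ρ x :=
    intervalIntegral.integral_nonneg (by linarith) (fun x _ => (hρ x).le)
  have hR : (∫ x in d₁..d₂, ρ x * G x) ≤ g * ∫ x in d₁..d₂, ρ x := by
    rw [← intervalIntegral.integral_const_mul]
    apply intervalIntegral.integral_mono_on hd (hii _ hρG _ _)
      (hii _ (continuous_const.mul hρc) _ _)
    intro x hx
    show ρ x * G x ≤ g * ρ x
    rw [mul_comm g (ρ x)]
    exact mul_le_mul_of_nonneg_left (hG2 x hx) (hρ x).le
  have hL : (∫ x in (-d₂)..(-d₁), ρ x * G x) ≤ g * ∫ x in (-d₂)..(-d₁), ρ x := by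
    rw [← intervalIntegral.integral_const_mul]
    apply intervalIntegral.integral_mono_on (by linarith) (hii _ hρG _ _)
      (hii _ (continuous_const.mul hρc) _ _)
    intro x hx
    show ρ x * G x ≤ g * ρ x
    rw [mul_comm g (ρ x)]
    exact mul_le_mul_of_nonneg_left (hG3 x hx) (hρ x).le
  have hS : g * (∫ x in (-d₁)..d₁, ρ x) ≤ ∫ x in (-d₁)..d₁, ρ x * G x := by
    rw [← intervalIntegral.integral_const_mul]
    apply intervalIntegral.integral_mono_on (by linarith)
      (hii _ (continuous_const.mul hρc) _ _) (hii _ hρG _ _)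
    intro x hx
    show g * ρ x ≤ ρ x * G x
    rw [mul_comm g (ρ x)]
    exact mul_le_mul_of_nonneg_left (hG1 x hx) (hρ x).le
  nlinarith [mul_le_mul_of_nonneg_right (add_le_add hL hR) hM₁.le,
    mul_le_mul_of_nonneg_right hS hLm, mul_le_mul_of_nonneg_right hS hRm]

lemma sym_eq {ρ F : ℝ → ℝ} (hρc : Continuous ρ) (hFc : Continuous F)
    (hρe : ∀ x, ρ (-x) = ρ x) (d : ℝ) :
    ∫ x in (-d)..d, ρ x * (F x + F (-x)) = 2 * ∫ x in (-d)..d, ρ x * F x := by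
  have h1 : (∫ x in (-d)..d, ρ x * F (-x)) = ∫ x in (-d)..d, ρ x * F x := by
    have h2 := intervalIntegral.integral_comp_neg (a := -d) (b := d) (fun y => ρ y * F y)
    simp only [neg_neg] at h2
    rw [← h2]
    apply intervalIntegral.integral_congr
    intro x _
    simp [hρe x]
  have h3 : (∫ x in (-d)..d, ρ x * (F x + F (-x)))
      = (∫ x in (-d)..d, ρ x * F x) + ∫ x in (-d)..d, ρ x * F (-x) := by
    have i2 : IntervalIntegrable (fun x => ρ x * F (-x)) volume (-d) d :=
      Continuous.intervalIntegrable (by fun_prop) _ _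
    rw [← intervalIntegral.integral_add (f := fun x => ρ x * F x)
      ((hρc.mul hFc).intervalIntegrable _ _) i2]
    apply intervalIntegral.integral_congr
    intro x _
    ring
  rw [h3, h1]; ring

lemma rho_cont : Continuous fun x : ℝ => (Real.sqrt (2 * Real.pi))⁻¹ * Real.exp (-x ^ 2 / 2) := by
  fun_prop

lemma gauss_Icc {a b : ℝ} (hab : a ≤ b) :
    (stdGaussian1 (Set.Icc a b)).toReal
      = ∫ x in a..b, (Real.sqrt (2 * Real.pi))⁻¹ * Real.exp (-x ^ 2 / 2) := by
  rw [stdGaussian1, withDensity_apply _ measurableSet_Icc,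
    ← ofReal_integral_eq_lintegral_ofReal (rho_cont.integrableOn_Icc)
      (Filter.Eventually.of_forall fun x => by positivity),
    ENNReal.toReal_ofReal (setIntegral_nonneg measurableSet_Icc fun x _ => by positivity),
    intervalIntegral.integral_of_le hab, integral_Icc_eq_integral_Ioc]

lemma gauss_int (F : ℝ → ℝ) {s : Set ℝ} (hs : MeasurableSet s) :
    ∫ x in s, F x ∂stdGaussian1
      = ∫ x in s, ((Real.sqrt (2 * Real.pi))⁻¹ * Real.exp (-x ^ 2 / 2)) * F x := by
  rw [stdGaussian1]
  have he : (fun x : ℝ => ENNReal.ofReal ((Real.sqrt (2 * Real.pi))⁻¹ * Real.exp (-x ^ 2 / 2)))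
      = fun x : ℝ =>
        ((Real.toNNReal ((Real.sqrt (2 * Real.pi))⁻¹ * Real.exp (-x ^ 2 / 2)) : ℝ≥0) : ℝ≥0∞) :=
    rfl
  rw [he, setIntegral_withDensity_eq_setIntegral_smul
    (rho_cont.measurable.real_toNNReal) F hs]
  refine setIntegral_congr_fun hs fun x _ => ?_
  rw [NNReal.smul_def, Real.coe_toNNReal _ (by positivity), smul_eq_mul]

/-- For `m ∈ ℝ` and `h ≥ 0`, the `μ₁`-average of `x ↦ Φ(m x + h)` over `[−d, d]` is
nonincreasing in `d` on `(0, ∞)`: for `0 < d₁ ≤ d₂` the average over `[−d₁, d₁]` is at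
least the average over `[−d₂, d₂]`. -/
theorem average_over_symmetric_interval_antitone
    (m h : ℝ) (hh : 0 ≤ h) (d₁ d₂ : ℝ) (hd₁ : 0 < d₁) (hd : d₁ ≤ d₂) :
    (∫ x in Set.Icc (-d₁) d₁, stdNormalCDF (m * x + h) ∂stdGaussian1) /
        (stdGaussian1 (Set.Icc (-d₁) d₁)).toReal ≥
      (∫ x in Set.Icc (-d₂) d₂, stdNormalCDF (m * x + h) ∂stdGaussian1) /
        (stdGaussian1 (Set.Icc (-d₂) d₂)).toReal := by
  have hd₂ : 0 < d₂ := lt_of_lt_of_le hd₁ hd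
  have hFc : Continuous fun x : ℝ => stdNormalCDF (m * x + h) :=
    cdf_cont.comp (by fun_prop)
  have hkey1 : ∀ d : ℝ, 0 < d →
      (∫ x in Set.Icc (-d) d, stdNormalCDF (m * x + h) ∂stdGaussian1) /
        (stdGaussian1 (Set.Icc (-d) d)).toReal
      = (1/2) * ((∫ x in (-d)..d,
            ((Real.sqrt (2 * Real.pi))⁻¹ * Real.exp (-x ^ 2 / 2)) * Gaux m h x)
          / (∫ x in (-d)..d, (Real.sqrt (2 * Real.pi))⁻¹ * Real.exp (-x ^ 2 / 2))) := by
    intro d hdpos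
    rw [gauss_int _ measurableSet_Icc, gauss_Icc (by linarith : -d ≤ d),
      integral_Icc_eq_integral_Ioc, ← intervalIntegral.integral_of_le (by linarith : -d ≤ d)]
    have hs := sym_eq (F := fun x : ℝ => stdNormalCDF (m * x + h)) rho_cont hFc
      (fun x => by rw [neg_pow]; norm_num) d
    unfold Gaux
    rw [hs]
    ring
  rw [ge_iff_le, hkey1 d₁ hd₁, hkey1 d₂ hd₂]
  have hmain := avg_core rho_cont (fun x => by positivity) (Gaux_cont m h) hd₁ hd
    (fun x hx => ?_) (fun x hx => Gaux_mono hh hd₁.le hx.1) (fun x hx => ?_)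
  · linarith
  · rcases le_total 0 x with h0 | h0
    · exact Gaux_mono hh h0 hx.2
    · rw [← Gaux_even m h x]
      exact Gaux_mono hh (by linarith) (by linarith [hx.1])
  · rw [← Gaux_even m h x]
    exact Gaux_mono hh hd₁.le (by linarith [hx.2])
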